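/- (Remark 3.1) For every ℓ > 0, every n ∈ ℕ, and every y > ℓ/2, one has h_{n+1,ℓ}(y) > h_{n,ℓ}(y) and h'_{n,ℓ}(y) > h'_{n+1,ℓ}(y), where h' denotes the derivative with respect to y. -/

import Mathlib

/-- `h ℓ n y = ((2y+ℓ)^(2n+1) + (2y−ℓ)^(2n+1)) / (4·(4y²−ℓ²)^n)`. -/
noncomputable def catenoidH (ℓ : ℝ) (n : ℕ) (y : ℝ) : ℝ :=
  ((2*y + ℓ)^(2*n+1) + (2*y - ℓ)^(2*n+1)) / (4 * (4*y^2 - ℓ^2)^n)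

/-!
With `a = 2y + ℓ`, `b = 2y - ℓ` and `4y² - ℓ² = ab`, one has `4 h_n = a^(n+1)/b^n + b^(n+1)/a^n`.
Since `a^(n+2)/b^(n+1) - a^(n+1)/b^n = (a - b)(a/b)^(n+1)`, this gives
`4 (h_{n+1} - h_n) = (a - b)((a/b)^(n+1) - (b/a)^(n+1)) > 0`.
As `a' = b' = 2`, the derivative of `a^(n+1)/b^n` is `2 φ_n(a/b)`, where
`φ_n(r) = powRatioDeriv n r = r^n (n + 1 - n r)`. Hence `2 h_n' = φ_n(a/b) + φ_n(b/a)`, and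
`φ_n(r) - φ_{n+1}(r) = (n + 1) r^n (r - 1)^2 > 0` for `r ≠ 1`.
-/

lemma pow_add_pow_div_mul_pow_eq {a b : ℝ} (ha : a ≠ 0) (hb : b ≠ 0) (n : ℕ) :
    (a^(2*n+1) + b^(2*n+1)) / (4 * (a*b)^n) = (a^(n+1) / b^n + b^(n+1) / a^n) / 4 := by
  field_simp
  ring

lemma catenoidH_eq {ℓ y : ℝ} (ha : 2*y + ℓ ≠ 0) (hb : 2*y - ℓ ≠ 0) (n : ℕ) :
    catenoidH ℓ n y =
      ((2*y + ℓ)^(n+1) / (2*y - ℓ)^n + (2*y - ℓ)^(n+1) / (2*y + ℓ)^n) / 4 := by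
  rw [catenoidH, show 4*y^2 - ℓ^2 = (2*y + ℓ) * (2*y - ℓ) by ring,
    pow_add_pow_div_mul_pow_eq ha hb]

lemma pow_succ_div_pow_sub_pow_div_pow {a b : ℝ} (hb : b ≠ 0) (n : ℕ) :
    a^(n+2) / b^(n+1) - a^(n+1) / b^n = (a - b) * (a / b)^(n+1) := by
  rw [div_pow]
  field_simp
  ring

lemma pow_succ_div_pow_add_lt {a b : ℝ} (hb : 0 < b) (hab : b < a) (n : ℕ) :
    a^(n+1) / b^n + b^(n+1) / a^n < a^(n+2) / b^(n+1) + b^(n+2) / a^(n+1) := by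
  have ha : 0 < a := hb.trans hab
  have hgt : 1 < (a / b)^(n+1) := one_lt_pow₀ ((one_lt_div hb).2 hab) n.succ_ne_zero
  have hlt : (b / a)^(n+1) < 1 :=
    pow_lt_one₀ (div_nonneg hb.le ha.le) ((div_lt_one ha).2 hab) n.succ_ne_zero
  have hdiff : (a^(n+2) / b^(n+1) + b^(n+2) / a^(n+1)) - (a^(n+1) / b^n + b^(n+1) / a^n)
      = (a - b) * ((a / b)^(n+1) - (b / a)^(n+1)) := by
    linear_combination pow_succ_div_pow_sub_pow_div_pow (a := a) hb.ne' n
      + pow_succ_div_pow_sub_pow_div_pow (a := b) ha.ne' n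
  have hpos : 0 < (a - b) * ((a / b)^(n+1) - (b / a)^(n+1)) :=
    mul_pos (sub_pos.2 hab) (by linarith)
  linarith

def powRatioDeriv (n : ℕ) (r : ℝ) : ℝ := r^n * (n + 1 - n * r)

lemma powRatioDeriv_sub_succ (n : ℕ) (r : ℝ) :
    powRatioDeriv n r - powRatioDeriv (n+1) r = (n + 1) * r^n * (r - 1)^2 := by
  simp only [powRatioDeriv]
  push_cast
  ring

lemma powRatioDeriv_succ_lt {r : ℝ} (hr : 0 < r) (hr1 : r ≠ 1) (n : ℕ) :
    powRatioDeriv (n+1) r < powRatioDeriv n r := by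
  have hpos : 0 < (n + 1 : ℝ) * r^n * (r - 1)^2 := by
    have : (r - 1)^2 ≠ 0 := pow_ne_zero 2 (sub_ne_zero.2 hr1)
    positivity
  linarith [powRatioDeriv_sub_succ n r]

lemma HasDerivAt.pow_succ_div_pow {u v : ℝ → ℝ} {u' v' x : ℝ} (hu : HasDerivAt u u' x)
    (hv : HasDerivAt v v' x) (hx : v x ≠ 0) (n : ℕ) :
    HasDerivAt (fun x => u x^(n+1) / v x^n)
      ((u x / v x)^n * ((n + 1) * u' - n * (u x / v x) * v')) x := by
  refine ((hu.pow (n+1)).div (hv.pow n) (pow_ne_zero n hx)).congr_deriv ?_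
  simp only [Pi.pow_apply, Nat.add_sub_cancel, div_pow]
  rcases n with _ | m
  · simp
  · field_simp
    push_cast
    ring

lemma hasDerivAt_catenoidH {ℓ y : ℝ} (ha : 0 < 2*y + ℓ) (hb : 0 < 2*y - ℓ) (n : ℕ) :
    HasDerivAt (catenoidH ℓ n)
      ((powRatioDeriv n ((2*y + ℓ) / (2*y - ℓ)) + powRatioDeriv n ((2*y - ℓ) / (2*y + ℓ))) / 2)
      y := by
  have hA : HasDerivAt (fun y => 2*y + ℓ) 2 y := by
    simpa using ((hasDerivAt_id y).const_mul 2).add_const ℓ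
  have hB : HasDerivAt (fun y => 2*y - ℓ) 2 y := by
    simpa using ((hasDerivAt_id y).const_mul 2).sub_const ℓ
  have hsum := ((hA.pow_succ_div_pow hB hb.ne' n).add
    (hB.pow_succ_div_pow hA ha.ne' n)).div_const 4
  have hloc : catenoidH ℓ n =ᶠ[nhds y]
      fun y => ((2*y + ℓ)^(n+1) / (2*y - ℓ)^n + (2*y - ℓ)^(n+1) / (2*y + ℓ)^n) / 4 := by
    have hopen : IsOpen {z : ℝ | 0 < 2*z + ℓ ∧ 0 < 2*z - ℓ} :=
      (isOpen_lt continuous_const (by fun_prop : Continuous fun z : ℝ => 2*z + ℓ)).inter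
        (isOpen_lt continuous_const (by fun_prop : Continuous fun z : ℝ => 2*z - ℓ))
    filter_upwards [hopen.mem_nhds ⟨ha, hb⟩] with z hz
    exact catenoidH_eq hz.1.ne' hz.2.ne' n
  refine (hsum.congr_of_eventuallyEq hloc).congr_deriv ?_
  simp only [powRatioDeriv]
  ring

theorem stmt_14 (ℓ : ℝ) (hℓ : 0 < ℓ) (n : ℕ) (y : ℝ) (hy : ℓ/2 < y) :
    catenoidH ℓ n y < catenoidH ℓ (n+1) y ∧
    deriv (catenoidH ℓ (n+1)) y < deriv (catenoidH ℓ n) y := by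
  have hb : 0 < 2*y - ℓ := by linarith
  have hab : 2*y - ℓ < 2*y + ℓ := by linarith
  have ha : 0 < 2*y + ℓ := hb.trans hab
  constructor
  · rw [catenoidH_eq ha.ne' hb.ne', catenoidH_eq ha.ne' hb.ne']
    exact div_lt_div_of_pos_right (pow_succ_div_pow_add_lt hb hab n) four_pos
  · rw [(hasDerivAt_catenoidH ha hb n).deriv, (hasDerivAt_catenoidH ha hb (n+1)).deriv]
    refine div_lt_div_of_pos_right (add_lt_add ?_ ?_) two_pos
    · exact powRatioDeriv_succ_lt (div_pos ha hb) ((one_lt_div hb).2 hab).ne' n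
    · exact powRatioDeriv_succ_lt (div_pos hb ha) ((div_lt_one ha).2 hab).ne n
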